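/- arXiv:1605.08457 — 7 statements merged into one kernel-verified Lean document; each statement's English description precedes it below -/
import Mathlib

section
/- Let C be a bounded operator on H such that C² = I and G = JC is a positive self-adjoint operator (J a fundamental symmetry). Then there exists a bounded self-adjoint operator Q with JQ = −QJ such that C = J e^Q. -/
/-!
`G = J C` is invertible with inverse `C J`, and positive, so `Q = log G` is a self-adjoint
element with `exp Q = G`, i.e. `C = J G = J exp Q`. Since `J` is a self-adjoint unitary,
`x ↦ J x J` is a continuous star automorphism; it therefore commutes with the continuous
functional calculus and sends `G` to `J G J = C J = G⁻¹`. Hence `J Q J = log G⁻¹ = -Q`.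
-/

open NormedSpace

namespace CFC

variable {A : Type*} [NormedRing A] [StarRing A] [NormedAlgebra ℝ A]
  [ContinuousFunctionalCalculus ℝ A IsSelfAdjoint]

lemma log_units_inv (u : Aˣ) (hu : IsSelfAdjoint (u : A)) : log (↑u⁻¹ : A) = -log (u : A) := by
  have hne : ∀ x ∈ spectrum ℝ (u : A), x ≠ 0 := fun x hx h ↦
    spectrum.zero_notMem ℝ u.isUnit (h ▸ hx)
  rw [log, ← cfc_comp_inv Real.log u (by fun_prop (disch := grind)), log, ← cfc_neg]
  exact cfc_congr fun x _ ↦ Real.log_inv x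

end CFC

lemma StarAlgHomClass.map_log {F A B : Type*} [NormedRing A] [StarRing A] [NormedAlgebra ℝ A]
    [ContinuousFunctionalCalculus ℝ A IsSelfAdjoint] [NormedRing B] [StarRing B]
    [NormedAlgebra ℝ B] [ContinuousFunctionalCalculus ℝ B IsSelfAdjoint]
    [ContinuousMap.UniqueHom ℝ B] [FunLike F A B] [AlgHomClass F ℝ A B] [StarHomClass F A B]
    (φ : F) (hφ : Continuous φ) {a : A} (ha : IsSelfAdjoint a) (ha' : IsUnit a) :
    φ (CFC.log a) = CFC.log (φ a) := by
  have hne : ∀ x ∈ spectrum ℝ a, x ≠ 0 := fun x hx h ↦ spectrum.zero_notMem ℝ ha' (h ▸ hx)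
  exact StarAlgHomClass.map_cfc φ Real.log a (by fun_prop (disch := grind)) hφ ha (ha.map φ)

lemma IsSelfAdjoint.mem_unitary_of_mul_self {R : Type*} [Monoid R] [StarMul R] {J : R}
    (hJ : IsSelfAdjoint J) (hJ2 : J * J = 1) : J ∈ unitary R :=
  Unitary.mem_iff.2 ⟨by rw [hJ.star_eq, hJ2], by rw [hJ.star_eq, hJ2]⟩

section CStarAlgebra

variable {A : Type*} [CStarAlgebra A]

lemma CFC.conj_log_eq_neg_of_conj_eq_inv {J : A} (hJ : IsSelfAdjoint J) (hJ2 : J * J = 1)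
    (u : Aˣ) (hu : IsSelfAdjoint (u : A)) (hconj : J * u * J = ↑u⁻¹) :
    J * log (u : A) * J = -log (u : A) := by
  let φ := Unitary.conjStarAlgAut ℝ A ⟨J, hJ.mem_unitary_of_mul_self hJ2⟩
  have hφ : ∀ x, φ x = J * x * J := fun x ↦ by simp [φ, hJ.star_eq]
  have hφcont : Continuous φ := by rw [show ⇑φ = fun x ↦ J * x * J from funext hφ]; fun_prop
  rw [← hφ, StarAlgHomClass.map_log φ hφcont hu u.isUnit, hφ, hconj, log_units_inv u hu]

theorem exists_isSelfAdjoint_anticomm_eq_mul_exp [PartialOrder A] [StarOrderedRing A] {J C : A}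
    (hJ : IsSelfAdjoint J) (hJ2 : J * J = 1) (hC2 : C * C = 1) (hG : 0 ≤ J * C) :
    ∃ Q : A, IsSelfAdjoint Q ∧ J * Q = -(Q * J) ∧ C = J * exp Q := by
  let G : Aˣ := ⟨J * C, C * J, by simp [mul_assoc, ← mul_assoc C, hC2, hJ2],
    by simp [mul_assoc, ← mul_assoc J, hC2, hJ2]⟩
  have hconj : J * G * J = ↑G⁻¹ := by simp [G, ← mul_assoc, hJ2]
  have hlog := CFC.conj_log_eq_neg_of_conj_eq_inv hJ hJ2 G hG.isSelfAdjoint hconj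
  refine ⟨CFC.log (G : A), .log, ?_, ?_⟩
  · rw [← neg_mul, ← hlog, mul_assoc _ J J, hJ2, mul_one]
  · rw [CFC.exp_log (G : A) (G.isUnit.isStrictlyPositive hG), ← mul_assoc, hJ2, one_mul]

end CStarAlgebra

/-- If `C` is a bounded operator with `C² = I` such that `G = JC` is a
positive self-adjoint operator, then `C = J e^Q` for some bounded self-adjoint `Q`
anticommuting with `J`. -/
theorem stmt_4 {E : Type*} [NormedAddCommGroup E] [InnerProductSpace ℂ E] [CompleteSpace E]
    (J C : E →L[ℂ] E) (hJ : IsSelfAdjoint J) (hJ2 : J * J = 1)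
    (hC2 : C * C = 1) (hGsa : IsSelfAdjoint (J * C))
    (hGpos : ∀ f : E, f ≠ 0 → 0 < (inner ℂ ((J * C) f) f : ℂ).re) :
    ∃ Q : E →L[ℂ] E, IsSelfAdjoint Q ∧ J * Q = -(Q * J) ∧ C = J * exp Q := by
  have hG : 0 ≤ J * C := by
    rw [ContinuousLinearMap.nonneg_iff_isPositive, ContinuousLinearMap.isPositive_def']
    refine ⟨hGsa, fun f ↦ ?_⟩
    rcases eq_or_ne f 0 with rfl | hf
    · simp [ContinuousLinearMap.reApplyInnerSelf]
    · exact (hGpos f hf).le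
  exact exists_isSelfAdjoint_anticomm_eq_mul_exp hJ hJ2 hC2 hG
end

section
/- Let C = J e^Q with Q bounded self-adjoint anticommuting with J, and define T = (I − e^Q)(I + e^Q)^{−1}. Then T is self-adjoint, anticommutes with J, satisfies ‖Tf‖ < ‖f‖ for all nonzero f, and T = −tanh(Q/2). -/
/-!
The Cayley-type transform of `e^Q` is `f(Q)` for the real function
`f(x) = (1 - eˣ)/(1 + eˣ) = -tanh(x/2)`. Everything follows from properties of `f`:
it is real, so `f(Q)` is self-adjoint; `|f| < 1` on the compact spectrum, so `‖f(Q)‖ < 1`;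
and `f` is odd, while conjugation by the unitary involution `J` is a ⋆-automorphism sending
`Q` to `-Q`, so `J f(Q) J = f(-Q) = -f(Q)`.
-/

open NormedSpace

@[fun_prop]
lemma Real.continuous_tanh : Continuous Real.tanh := by
  simp_rw [funext Real.tanh_eq_sinh_div_cosh]
  exact Real.continuous_sinh.div Real.continuous_cosh fun x => (Real.cosh_pos x).ne'

lemma Real.neg_tanh_half (x : ℝ) :
    -Real.tanh (x / 2) = (1 - Real.exp x) / (1 + Real.exp x) := by
  have hx : Real.exp x = Real.exp (x / 2) ^ 2 := by rw [← Real.exp_nat_mul]; ring_nf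
  rw [Real.tanh_eq, Real.exp_neg, hx]
  field_simp
  ring

section CStarAlgebra

variable {A : Type*} [CStarAlgebra A]

lemma Unitary.mul_cfc_mul_star (u : unitary A) (f : ℝ → ℝ) {a : A}
    (hf : ContinuousOn f (spectrum ℝ a)) (ha : IsSelfAdjoint a) :
    u * cfc f a * star (u : A) = cfc f (u * a * star (u : A)) :=
  StarAlgHomClass.map_cfc (Unitary.conjStarAlgAut ℝ A u) f a hf
    (by show Continuous fun x : A => u * x * star (u : A); fun_prop) ha (ha.conjugate _)

lemma mul_cfc_eq_neg_cfc_mul_of_odd {J a : A} (hJ : IsSelfAdjoint J) (hJ2 : J * J = 1)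
    (ha : IsSelfAdjoint a) (hJa : J * a = -(a * J)) {f : ℝ → ℝ} (hf : Continuous f)
    (hodd : Function.Odd f) : J * cfc f a = -(cfc f a * J) := by
  have hJu : J ∈ unitary A :=
    Unitary.mem_iff.mpr ⟨by rw [hJ.star_eq, hJ2], by rw [hJ.star_eq, hJ2]⟩
  have hconj : J * cfc f a * J = -cfc f a := by
    have := Unitary.mul_cfc_mul_star ⟨J, hJu⟩ f hf.continuousOn ha
    simp only [hJ.star_eq] at this
    rw [this, hJa, neg_mul, mul_assoc, hJ2, mul_one, ← cfc_comp_neg f a, ← cfc_neg]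
    exact cfc_congr fun x _ => hodd x
  calc J * cfc f a = J * cfc f a * J * J := by rw [mul_assoc _ J J, hJ2, mul_one]
    _ = -(cfc f a * J) := by rw [hconj, neg_mul]

lemma one_sub_exp_mul_inverse_one_add_exp {a : A} (ha : IsSelfAdjoint a) :
    (1 - exp a) * Ring.inverse (1 + exp a) = cfc (fun x => -Real.tanh (x / 2)) a := by
  have hpos : ∀ x ∈ spectrum ℝ a, 1 + Real.exp x ≠ 0 := fun x _ => by positivity
  have hinv : ContinuousOn (fun x => (1 + Real.exp x)⁻¹) (spectrum ℝ a) :=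
    ContinuousOn.inv₀ (by fun_prop) hpos
  rw [← CFC.real_exp_eq_normedSpace_exp ha, ← cfc_const_one ℝ a,
    ← cfc_sub (fun _ => 1) Real.exp a, ← cfc_add (a := a) (fun _ => 1) Real.exp,
    ← cfc_inv (fun x => 1 + Real.exp x) a hpos,
    ← cfc_mul (fun x => 1 - Real.exp x) _ a (by fun_prop) hinv]
  exact cfc_congr fun x _ => by rw [Real.neg_tanh_half, div_eq_mul_inv]

lemma norm_cfc_neg_tanh_half_lt_one (a : A) : ‖cfc (fun x => -Real.tanh (x / 2)) a‖ < 1 :=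
  norm_cfc_lt one_pos fun x _ => by
    simpa only [Real.norm_eq_abs, abs_neg] using Real.abs_tanh_lt_one (x / 2)

end CStarAlgebra

lemma ContinuousLinearMap.norm_apply_lt_of_norm_lt_one {𝕜 E : Type*}
    [NontriviallyNormedField 𝕜] [NormedAddCommGroup E] [NormedSpace 𝕜 E] {T : E →L[𝕜] E}
    (hT : ‖T‖ < 1) {f : E} (hf : f ≠ 0) :
    ‖T f‖ < ‖f‖ :=
  calc ‖T f‖ ≤ ‖T‖ * ‖f‖ := T.le_opNorm f
    _ < 1 * ‖f‖ := mul_lt_mul_of_pos_right hT (norm_pos_iff.mpr hf)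
    _ = ‖f‖ := one_mul _

/-- For `C = J e^Q` (`Q` bounded self-adjoint, `JQ = −QJ`), the operator
`T = (I − e^Q)(I + e^Q)^{−1}` is self-adjoint, anticommutes with `J`, is a strong
contraction (`‖Tf‖ < ‖f‖` for `f ≠ 0`), and equals `−tanh(Q/2)` (via the continuous
functional calculus). -/
theorem stmt_6 {E : Type*} [NormedAddCommGroup E] [InnerProductSpace ℂ E] [CompleteSpace E]
    (J Q : E →L[ℂ] E) (hJ : IsSelfAdjoint J) (hJ2 : J * J = 1)
    (hQ : IsSelfAdjoint Q) (hJQ : J * Q = -(Q * J))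
    (T : E →L[ℂ] E) (hT : T = (1 - exp Q) * Ring.inverse (1 + exp Q)) :
    IsSelfAdjoint T ∧ J * T = -(T * J) ∧ (∀ f : E, f ≠ 0 → ‖T f‖ < ‖f‖) ∧
      T = -(cfc (fun x : ℝ => Real.tanh (x / 2)) Q) := by
  rw [one_sub_exp_mul_inverse_one_add_exp hQ] at hT
  subst hT
  have hodd : Function.Odd fun x : ℝ => -Real.tanh (x / 2) := fun x => by
    simp only [neg_div, Real.tanh_neg, neg_neg]
  refine ⟨cfc_predicate _ Q, mul_cfc_eq_neg_cfc_mul_of_odd hJ hJ2 hQ hJQ (by fun_prop) hodd,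
    fun f hf => ContinuousLinearMap.norm_apply_lt_of_norm_lt_one
      (norm_cfc_neg_tanh_half_lt_one Q) hf, cfc_neg _ Q⟩
end

section
/- Let C = J e^Q with Q bounded self-adjoint anticommuting with J, and set L₊ = (1/2)(I + C)H. Then L₊ is uniformly positive: there exists α > 0 such that [f,f] ≥ α ‖f‖² for all f ∈ L₊, where [f,g] = (Jf,g). -/
/-!
Since `J` anticommutes with `Q`, it intertwines `exp Q` and `exp (-Q)`, so `C = J exp Q` is an
involution. Hence `C` fixes every `f = (f₀ + C f₀)/2 ∈ L₊`, and `J f = J C f = exp Q f`. Writing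
`exp Q = P²` with `P = exp (Q/2)` self-adjoint and invertible, `[f, f] = ‖P f‖²`, which is at least
`‖f‖² / (‖P⁻¹‖² + 1)`.
-/

open NormedSpace

-- The exponential lemmas are stated for `ℚ`-algebras, which operator algebras are not inferred to be.
noncomputable instance ContinuousLinearMap.normedAlgebraRat {𝕜 E : Type*}
    [NontriviallyNormedField 𝕜] [NormedAlgebra ℚ 𝕜] [SeminormedAddCommGroup E] [NormedSpace 𝕜 E] :
    NormedAlgebra ℚ (E →L[𝕜] E) :=
  NormedAlgebra.restrictScalars ℚ 𝕜 _

theorem mul_exp_mul_self_eq_one {𝔸 : Type*} [NormedRing 𝔸] [NormedAlgebra ℚ 𝔸] [CompleteSpace 𝔸]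
    {J Q : 𝔸} (hJ2 : J * J = 1) (hJQ : J * Q = -(Q * J)) : J * exp Q * (J * exp Q) = 1 := by
  have hsemiconj : SemiconjBy J Q (-Q) := by rw [SemiconjBy, hJQ, neg_mul]
  have hconj : exp Q * J * exp Q = J := by
    simpa only [neg_neg] using hsemiconj.exp_neg_mul_mul_exp_eq_self
  calc J * exp Q * (J * exp Q) = J * (exp Q * J * exp Q) := by simp only [mul_assoc]
    _ = 1 := by rw [hconj, hJ2]

theorem exp_neg_mul_exp {𝔸 : Type*} [NormedRing 𝔸] [NormedAlgebra ℚ 𝔸] [CompleteSpace 𝔸]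
    (x : 𝔸) : exp (-x) * exp x = 1 := by
  rw [← exp_add_of_commute (Commute.refl x).neg_left, neg_add_cancel, exp_zero]

theorem apply_smul_add_apply_eq_self {R M F : Type*} [Semiring R] [AddCommMonoid M] [Module R M]
    [FunLike F M M] [LinearMapClass F R M M] {C : F} (hC : Function.Involutive C) (c : R) (x : M) :
    C (c • (x + C x)) = c • (x + C x) := by
  rw [map_smul, map_add, hC x, add_comm]

theorem ContinuousLinearMap.exists_pos_mul_norm_sq_le_norm_apply_sq {𝕜 E F : Type*}
    [NontriviallyNormedField 𝕜] [SeminormedAddCommGroup E] [SeminormedAddCommGroup F]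
    [NormedSpace 𝕜 E] [NormedSpace 𝕜 F] {P : E →L[𝕜] F} {N : F →L[𝕜] E}
    (hNP : ∀ x, N (P x) = x) : ∃ α : ℝ, 0 < α ∧ ∀ x, α * ‖x‖ ^ 2 ≤ ‖P x‖ ^ 2 := by
  refine ⟨(‖N‖ ^ 2 + 1)⁻¹, by positivity, fun x => ?_⟩
  have hx : ‖x‖ ≤ ‖N‖ * ‖P x‖ := by simpa only [hNP] using N.le_opNorm (P x)
  rw [inv_mul_le_iff₀ (by positivity)]
  calc ‖x‖ ^ 2 ≤ (‖N‖ * ‖P x‖) ^ 2 := pow_le_pow_left₀ (norm_nonneg x) hx 2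
    _ ≤ (‖N‖ ^ 2 + 1) * ‖P x‖ ^ 2 := by nlinarith [sq_nonneg ‖P x‖]

section HilbertSpace

variable {𝕜 E : Type*} [RCLike 𝕜] [NormedAddCommGroup E] [InnerProductSpace 𝕜 E] [CompleteSpace E]

theorem IsSelfAdjoint.re_inner_apply_apply_self {P : E →L[𝕜] E} (hP : IsSelfAdjoint P) (x : E) :
    RCLike.re (inner 𝕜 (P (P x)) x) = ‖P x‖ ^ 2 := by
  have hsymm : inner 𝕜 (P (P x)) x = inner 𝕜 (P x) (P x) := hP.isSymmetric (P x) x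
  rw [hsymm, inner_self_eq_norm_sq]

theorem IsSelfAdjoint.exists_pos_mul_norm_sq_le_re_inner_exp {Q : E →L[𝕜] E}
    (hQ : IsSelfAdjoint Q) :
    ∃ α : ℝ, 0 < α ∧ ∀ x, α * ‖x‖ ^ 2 ≤ RCLike.re (inner 𝕜 (NormedSpace.exp Q x) x) := by
  set R := (2⁻¹ : 𝕜) • Q
  have hR : IsSelfAdjoint R := .smul (by simp [IsSelfAdjoint]) hQ
  have hexp : NormedSpace.exp Q = NormedSpace.exp R * NormedSpace.exp R := by
    rw [← exp_add_of_commute (Commute.refl R), ← add_smul]; norm_num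
  obtain ⟨α, hα, hbound⟩ := ContinuousLinearMap.exists_pos_mul_norm_sq_le_norm_apply_sq
    (P := NormedSpace.exp R) (N := NormedSpace.exp (-R)) fun x => by
      rw [← mul_apply_eq_comp, exp_neg_mul_exp, one_apply_eq_self]
  refine ⟨α, hα, fun x => ?_⟩
  rw [hexp, mul_apply_eq_comp, hR.exp.re_inner_apply_apply_self]
  exact hbound x

end HilbertSpace

theorem stmt_10_general {E : Type*} [NormedAddCommGroup E] [InnerProductSpace ℂ E] [CompleteSpace E]
    (J Q : E →L[ℂ] E) (hJ2 : J * J = 1)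
    (hQ : IsSelfAdjoint Q) (hJQ : J * Q = -(Q * J))
    (C : E →L[ℂ] E) (hC : C = J * exp Q)
    (Lp : Set E) (hLp : Lp = Set.range (fun x : E => ((1 : ℂ)/2) • (x + C x))) :
    ∃ α : ℝ, 0 < α ∧ ∀ f ∈ Lp, α * ‖f‖^2 ≤ (inner ℂ (J f) f : ℂ).re := by
  obtain ⟨α, hα, hpos⟩ := hQ.exists_pos_mul_norm_sq_le_re_inner_exp
  refine ⟨α, hα, ?_⟩
  subst hLp
  rintro f ⟨x, hx⟩
  have hCinv : Function.Involutive C := fun y => by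
    rw [← mul_apply_eq_comp, hC, mul_exp_mul_self_eq_one hJ2 hJQ, one_apply_eq_self]
  have hCf : C f = f := hx ▸ apply_smul_add_apply_eq_self hCinv _ _
  have hJC : J * C = exp Q := by rw [hC, ← mul_assoc, hJ2, one_mul]
  calc α * ‖f‖ ^ 2 ≤ RCLike.re (inner ℂ (exp Q f) f) := hpos f
    _ = (inner ℂ (J f) f).re := by rw [← hJC, mul_apply_eq_comp, hCf]; rfl

/-- For `C = J e^Q` (`Q` bounded self-adjoint, `JQ = −QJ`), the subspace
`L₊ = (1/2)(I+C)H` is uniformly positive: there is `α > 0` with `[f,f] ≥ α‖f‖²` for all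
`f ∈ L₊`, where `[f,g] = (Jf,g)`. -/
theorem stmt_10 {E : Type*} [NormedAddCommGroup E] [InnerProductSpace ℂ E] [CompleteSpace E]
    (J Q : E →L[ℂ] E) (hJ : IsSelfAdjoint J) (hJ2 : J * J = 1)
    (hQ : IsSelfAdjoint Q) (hJQ : J * Q = -(Q * J))
    (C : E →L[ℂ] E) (hC : C = J * exp Q)
    (Lp : Set E) (hLp : Lp = Set.range (fun x : E => ((1 : ℂ)/2) • (x + C x))) :
    ∃ α : ℝ, 0 < α ∧ ∀ f ∈ Lp, α * ‖f‖^2 ≤ (inner ℂ (J f) f : ℂ).re :=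
  stmt_10_general J Q hJ2 hQ hJQ C hC Lp hLp
end

section
/- Let A be a J-symmetric operator on H whose eigenvectors {f_n} corresponding to distinct real simple eigenvalues have dense linear span in H. Then [f_n, f_n] ≠ 0 for every n, where [f,g] = (Jf,g). -/
/-!
If `A f = λ f` and `A g = μ g` with `λ, μ` real, then `J`-symmetry gives
`λ [f, g] = [A f, g] = [f, A g] = μ [f, g]`, so eigenvectors for distinct eigenvalues are
`J`-orthogonal. If moreover `[fₙ, fₙ] = 0`, then `J fₙ` is orthogonal to every `fₘ`, hence to
their dense span, hence `J fₙ = 0`; as `J² = 1` this forces `fₙ = 0`.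
-/

open scoped InnerProductSpace

section

variable {𝕜 E : Type*} [RCLike 𝕜] [NormedAddCommGroup E] [InnerProductSpace 𝕜 E]

theorem eq_zero_of_inner_eq_zero_of_dense_span {ι : Type*} {v : ι → E}
    (hv : Dense (Submodule.span 𝕜 (Set.range v) : Set E)) {x : E} (h : ∀ i, ⟪x, v i⟫_𝕜 = 0) :
    x = 0 := by
  have hspan : Submodule.span 𝕜 (Set.range v) ≤ (𝕜 ∙ x)ᗮ := by
    rw [Submodule.span_le]
    rintro _ ⟨i, rfl⟩
    exact Submodule.mem_orthogonal_singleton_iff_inner_right.2 (h i)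
  exact Dense.eq_zero_of_inner_left (𝕜 := 𝕜) hv fun w hw =>
    Submodule.mem_orthogonal_singleton_iff_inner_right.1 (hspan hw)

namespace LinearPMap

def IsJSymmetric (A : E →ₗ.[𝕜] E) (J : E →L[𝕜] E) : Prop :=
  ∀ f g : A.domain, ⟪J (A f), g⟫_𝕜 = ⟪J f, A g⟫_𝕜

theorem IsJSymmetric.inner_eq_zero_of_eigenvalues_ne {A : E →ₗ.[𝕜] E} {J : E →L[𝕜] E}
    (hA : A.IsJSymmetric J) {x y : A.domain} {a b : ℝ} (hx : A x = (a : 𝕜) • (x : E))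
    (hy : A y = (b : 𝕜) • (y : E)) (hab : a ≠ b) : ⟪J x, y⟫_𝕜 = 0 := by
  have h := hA x y
  rw [hx, hy, J.map_smul, inner_smul_left, inner_smul_right, RCLike.conj_ofReal] at h
  have hab' : (a : 𝕜) - b ≠ 0 := sub_ne_zero.2 (RCLike.ofReal_injective.ne hab)
  exact (mul_eq_zero.1 (by rw [sub_mul, h, sub_self])).resolve_left hab'

end LinearPMap

end

theorem stmt_13_general {E : Type*} [NormedAddCommGroup E] [InnerProductSpace ℂ E]
    (J : E →L[ℂ] E) (hJ2 : J * J = 1)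
    (A : E →ₗ.[ℂ] E)
    (hAsym : ∀ f g : A.domain, (inner ℂ (J (A f)) (g : E) : ℂ) = inner ℂ (J (f : E)) (A g))
    (f : ℕ → A.domain) (lam : ℕ → ℝ)
    (hfne : ∀ n, (f n : E) ≠ 0)
    (heig : ∀ n, A (f n) = (lam n : ℂ) • (f n : E))
    (hdist : Function.Injective lam)
    (hspan : Dense (Submodule.span ℂ (Set.range (fun n => (f n : E))) : Set E)) :
    ∀ n, inner ℂ (J (f n : E)) (f n : E) ≠ (0 : ℂ) := by
  intro n hn
  have horth : ∀ m, ⟪J (f n), f m⟫_ℂ = 0 := fun m => by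
    rcases eq_or_ne m n with rfl | hmn
    · exact hn
    · exact LinearPMap.IsJSymmetric.inner_eq_zero_of_eigenvalues_ne hAsym (heig n) (heig m)
        (hdist.ne hmn.symm)
  have hJf : J (f n) = 0 := eq_zero_of_inner_eq_zero_of_dense_span hspan horth
  have hJJ : J (J (f n)) = f n := congr($hJ2 (f n : E))
  exact hfne n (by rw [← hJJ, hJf, map_zero])

/-- Let `A` be a `J`-symmetric operator whose eigenvectors `{fₙ}`,
corresponding to distinct real (simple) eigenvalues, have dense linear span in `H`.
Then `[fₙ, fₙ] ≠ 0` for every `n`, where `[f,g] = (Jf,g)`. -/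
theorem stmt_13 {E : Type*} [NormedAddCommGroup E] [InnerProductSpace ℂ E] [CompleteSpace E]
    (J : E →L[ℂ] E) (hJ : IsSelfAdjoint J) (hJ2 : J * J = 1)
    (A : E →ₗ.[ℂ] E) (hAdense : Dense (A.domain : Set E))
    (hAsym : ∀ f g : A.domain, (inner ℂ (J (A f)) (g : E) : ℂ) = inner ℂ (J (f : E)) (A g))
    (f : ℕ → A.domain) (lam : ℕ → ℝ)
    (hfne : ∀ n, (f n : E) ≠ 0)
    (heig : ∀ n, A (f n) = (lam n : ℂ) • (f n : E))
    (hdist : Function.Injective lam)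
    (hspan : Dense (Submodule.span ℂ (Set.range (fun n => (f n : E))) : Set E)) :
    ∀ n, inner ℂ (J (f n : E)) (f n : E) ≠ (0 : ℂ) :=
  stmt_13_general J hJ2 A hAsym f lam hfne heig hdist hspan
end

section
/- Let T be a bounded self-adjoint operator with ‖T‖ < 1 and JT = −TJ, and let C = J(I+T)^{−1}(I−T). Then C is bounded, C² = I, and JC = (I+T)^{−1}(I−T) is a positive self-adjoint operator. -/
/-!
Since `J` anticommutes with `T`, it intertwines `1 + T` and `1 - T`, hence conjugates
`K = (1 + T)⁻¹(1 - T)` into `(1 - T)⁻¹(1 + T) = K⁻¹`; with `J² = 1` this gives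
`(JK)² = (JKJ)K = K⁻¹K = 1`. The factors of `K` are commuting self-adjoint operators, so `K` is
self-adjoint, and writing `f = (1 + T) g` gives `Re ⟪K f, f⟫ = Re ⟪g - T g, g + T g⟫
= ‖g‖² - ‖T g‖² > 0` because `‖T‖ < 1`.
-/

theorem SemiconjBy.ringInverse {M₀ : Type*} [MonoidWithZero M₀] {a x y : M₀}
    (h : SemiconjBy a x y) (hx : IsUnit x) (hy : IsUnit y) :
    SemiconjBy a (Ring.inverse x) (Ring.inverse y) := by
  obtain ⟨u, rfl⟩ := hx
  obtain ⟨v, rfl⟩ := hy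
  rw [Ring.inverse_unit, Ring.inverse_unit]
  exact h.units_inv_right

theorem Commute.ringInverse_left {M₀ : Type*} [MonoidWithZero M₀] {a b : M₀}
    (h : Commute a b) : Commute (Ring.inverse a) b := by
  by_cases ha : IsUnit a
  · obtain ⟨u, rfl⟩ := ha
    rw [Ring.inverse_unit]
    exact h.units_inv_left
  · rw [Ring.inverse_non_unit a ha]
    exact Commute.zero_left b

section Cayley

variable {R : Type*} [Ring R]

noncomputable def cayley (T : R) : R := Ring.inverse (1 + T) * (1 - T)

theorem commute_one_add_one_sub (T : R) : Commute (1 + T) (1 - T) :=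
  (Commute.one_left _).add_left ((Commute.one_right T).sub_right (Commute.refl T))

theorem cayley_eq_mul_inverse (T : R) : cayley T = (1 - T) * Ring.inverse (1 + T) :=
  (Commute.ringInverse_left (commute_one_add_one_sub T)).eq

theorem cayley_neg (T : R) : cayley (-T) = Ring.inverse (1 - T) * (1 + T) := by
  rw [cayley, ← sub_eq_add_neg, sub_neg_eq_add]

theorem cayley_neg_mul_cayley {T : R} (hadd : IsUnit (1 + T)) (hsub : IsUnit (1 - T)) :
    cayley (-T) * cayley T = 1 := by
  rw [cayley_neg, cayley, mul_assoc, Ring.mul_inverse_cancel_left _ _ hadd,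
    Ring.inverse_mul_cancel _ hsub]

theorem semiconjBy_one_add_of_anticommute {J T : R} (hJT : J * T = -(T * J)) :
    SemiconjBy J (1 + T) (1 - T) := by
  rw [SemiconjBy, mul_add, hJT, sub_mul, mul_one, one_mul, sub_eq_add_neg]

theorem semiconjBy_cayley_of_anticommute {J T : R} (hJT : J * T = -(T * J))
    (hadd : IsUnit (1 + T)) (hsub : IsUnit (1 - T)) : SemiconjBy J (cayley T) (cayley (-T)) := by
  have hJT' : J * -T = -(-T * J) := by rw [mul_neg, neg_mul, hJT]
  have hsemi : SemiconjBy J (1 - T) (1 + T) := by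
    simpa [← sub_eq_add_neg] using semiconjBy_one_add_of_anticommute hJT'
  rw [cayley_neg]
  exact (semiconjBy_one_add_of_anticommute hJT).ringInverse hadd hsub |>.mul_right hsemi

theorem mul_cayley_mul_self_of_anticommute {J T : R} (hJ2 : J * J = 1)
    (hJT : J * T = -(T * J)) (hadd : IsUnit (1 + T)) :
    J * cayley T * (J * cayley T) = 1 := by
  have hsub : IsUnit (1 - T) := by
    have hJ : IsUnit J := (Units.mk J J hJ2 hJ2).isUnit
    have hconj : 1 - T = J * (1 + T) * J := by
      rw [(semiconjBy_one_add_of_anticommute hJT).eq, mul_assoc, hJ2, mul_one]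
    rw [hconj]
    exact (hJ.mul hadd).mul hJ
  rw [← mul_assoc, (semiconjBy_cayley_of_anticommute hJT hadd hsub).eq, mul_assoc _ J J, hJ2,
    mul_one, cayley_neg_mul_cayley hadd hsub]

theorem IsSelfAdjoint.cayley [StarRing R] {T : R} (hT : IsSelfAdjoint T) :
    IsSelfAdjoint (cayley T) :=
  (IsSelfAdjoint.commute_iff ((IsSelfAdjoint.one R).add hT).ringInverse
    ((IsSelfAdjoint.one R).sub hT)).mp (Commute.ringInverse_left (commute_one_add_one_sub T))

end Cayley

theorem isUnit_one_add_of_norm_lt_one {R : Type*} [NormedRing R] [HasSummableGeomSeries R]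
    {x : R} (h : ‖x‖ < 1) : IsUnit (1 + x) := by
  simpa [sub_eq_add_neg] using isUnit_one_sub_of_norm_lt_one (x := -x) (by rwa [norm_neg])

section InnerProduct

variable {𝕜 E : Type*} [RCLike 𝕜] [NormedAddCommGroup E] [InnerProductSpace 𝕜 E]

open RCLike in
theorem re_inner_sub_add (x y : E) : re (inner 𝕜 (x - y) (x + y)) = ‖x‖ ^ 2 - ‖y‖ ^ 2 := by
  rw [inner_sub_left, inner_add_right, inner_add_right, map_sub, map_add, map_add,
    inner_re_symm (𝕜 := 𝕜) y x, inner_self_eq_norm_sq (𝕜 := 𝕜),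
    inner_self_eq_norm_sq (𝕜 := 𝕜)]
  ring

open RCLike in
theorem re_inner_cayley_apply_pos [CompleteSpace E] {T : E →L[𝕜] E} (hT : ‖T‖ < 1) {f : E}
    (hf : f ≠ 0) : 0 < re (inner 𝕜 (cayley T f) f) := by
  have hadd : IsUnit (1 + T) := isUnit_one_add_of_norm_lt_one hT
  set g := Ring.inverse (1 + T) f
  have hf_eq : f = g + T g :=
    calc f = ((1 + T) * Ring.inverse (1 + T)) f := by
          rw [Ring.mul_inverse_cancel _ hadd, one_apply_eq_self]
      _ = g + T g := by rw [mul_apply_eq_comp, add_apply, one_apply_eq_self]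
  have hKf : cayley T f = g - T g := by
    rw [cayley_eq_mul_inverse, mul_apply_eq_comp, sub_apply, one_apply_eq_self]
  have hg : g ≠ 0 := fun hg ↦ hf (by rw [hf_eq, hg, map_zero, add_zero])
  have hTg : ‖T g‖ < ‖g‖ :=
    (T.le_opNorm g).trans_lt (mul_lt_of_lt_one_left (norm_pos_iff.2 hg) hT)
  rw [hKf, hf_eq, re_inner_sub_add, sub_pos]
  gcongr

end InnerProduct

theorem stmt_14_general {E : Type*} [NormedAddCommGroup E] [InnerProductSpace ℂ E] [CompleteSpace E]
    (J T : E →L[ℂ] E) (hJ2 : J * J = 1)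
    (hT : IsSelfAdjoint T) (hTn : ‖T‖ < 1) (hJT : J * T = -(T * J))
    (C : E →L[ℂ] E) (hC : C = J * (Ring.inverse (1 + T) * (1 - T))) :
    C * C = 1 ∧ J * C = Ring.inverse (1 + T) * (1 - T) ∧
      IsSelfAdjoint (Ring.inverse (1 + T) * (1 - T)) ∧
      ∀ f : E, f ≠ 0 → 0 < (inner ℂ ((Ring.inverse (1 + T) * (1 - T)) f) f : ℂ).re := by
  subst hC
  exact ⟨mul_cayley_mul_self_of_anticommute hJ2 hJT (isUnit_one_add_of_norm_lt_one hTn),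
    by rw [← mul_assoc, hJ2, one_mul], hT.cayley, fun f hf ↦ re_inner_cayley_apply_pos hTn hf⟩

/-- If `T` is bounded self-adjoint with `‖T‖ < 1` and `JT = −TJ`, then
`C = J(I+T)^{−1}(I−T)` is bounded with `C² = I`, and `JC = (I+T)^{−1}(I−T)` is a positive
self-adjoint operator. -/
theorem stmt_14 {E : Type*} [NormedAddCommGroup E] [InnerProductSpace ℂ E] [CompleteSpace E]
    (J T : E →L[ℂ] E) (hJ : IsSelfAdjoint J) (hJ2 : J * J = 1)
    (hT : IsSelfAdjoint T) (hTn : ‖T‖ < 1) (hJT : J * T = -(T * J))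
    (C : E →L[ℂ] E) (hC : C = J * (Ring.inverse (1 + T) * (1 - T))) :
    C * C = 1 ∧ J * C = Ring.inverse (1 + T) * (1 - T) ∧
      IsSelfAdjoint (Ring.inverse (1 + T) * (1 - T)) ∧
      ∀ f : E, f ≠ 0 → 0 < (inner ℂ ((Ring.inverse (1 + T) * (1 - T)) f) f : ℂ).re :=
  stmt_14_general J T hJ2 hT hTn hJT C hC
end

section
/- Let T be a bounded self-adjoint strong contraction (‖Tf‖ < ‖f‖ for f ≠ 0) anticommuting with J, let L₊ = (I+T)H₊ with H₊ = ker(J−I), and let P̂ denote the orthogonal projection onto the closure of L₊ and P₊ = (1/2)(I+J). Then for every f ∈ H₊, P₊ P̂ f = (I + T²)^{−1} f; consequently (I_{H₊} − P₊P̂)↾H₊ = T²(I+T²)^{−1}↾H₊. -/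
/-!
Since `J` anticommutes with `T`, it commutes with `T²`, and `I + T² ≥ I` is invertible, so
`u = (I + T²)⁻¹ f` lies in `H₊` whenever `f` does. Then `g = u + T u ∈ L₊`, and
`(I + T)(f - g) = T (T² u - u)` lies in `H₋ = ker (J + I)`, which is orthogonal to `H₊`;
as `I + T` is self-adjoint, `f - g ⟂ L₊`. Hence `P̂ f = u + T u`, and `P₊ P̂ f = u`
because `J (u + T u) = u - T u`.
-/

theorem commute_mul_self_of_mul_eq_neg_mul {R : Type*} [Ring R] {a b : R}
    (h : a * b = -(b * a)) : Commute a (b * b) := by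
  have hab : SemiconjBy a b (-b) := by rw [SemiconjBy, h, neg_mul]
  have := hab.mul_right hab
  rwa [neg_mul_neg] at this

theorem IsSelfAdjoint.isUnit_one_add_mul_self {A : Type*} [CStarAlgebra A] [PartialOrder A]
    [StarOrderedRing A] {a : A} (ha : IsSelfAdjoint a) : IsUnit (1 + a * a) := by
  have : 0 ≤ a * a := by simpa [ha.star_eq] using star_mul_self_nonneg a
  exact (isStrictlyPositive_one.add_nonneg this).isUnit

theorem Commute.ringInverse_right {M₀ : Type*} [MonoidWithZero M₀] {a b : M₀}
    (h : Commute a b) (hb : IsUnit b) : Commute a (Ring.inverse b) := by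
  obtain ⟨u, rfl⟩ := hb
  rw [Ring.inverse_unit]
  exact h.units_inv_right

section FundamentalSymmetry

variable {E : Type*} [NormedAddCommGroup E] [InnerProductSpace ℂ E] {J T : E →L[ℂ] E}

theorem mem_ker_sub_one_iff {v : E} :
    v ∈ LinearMap.ker ((J - 1 : E →L[ℂ] E) : E →ₗ[ℂ] E) ↔ J v = v := by
  simp [sub_eq_zero]

theorem apply_apply_of_mul_eq_neg_mul (hJT : J * T = -(T * J)) (x : E) :
    J (T x) = -T (J x) := by
  simpa using DFunLike.congr_fun hJT x

variable [CompleteSpace E]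

theorem IsSelfAdjoint.inner_eq_zero_of_apply_eq_neg_of_apply_eq (hJ : IsSelfAdjoint J)
    {x y : E} (hx : J x = -x) (hy : J y = y) : inner ℂ x y = 0 := by
  have h : inner ℂ (J x) y = inner ℂ x (J y) := hJ.isSymmetric x y
  rw [hx, hy, inner_neg_left] at h
  linear_combination -h / 2

theorem starProjection_add_apply_apply (hJ : IsSelfAdjoint J) (hT : IsSelfAdjoint T)
    (hJT : J * T = -(T * J)) {K : Submodule ℂ E} [K.HasOrthogonalProjection]
    (hK : K = (Submodule.map ((1 + T : E →L[ℂ] E) : E →ₗ[ℂ] E)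
        (LinearMap.ker ((J - 1 : E →L[ℂ] E) : E →ₗ[ℂ] E))).topologicalClosure)
    {u : E} (hu : J u = u) :
    K.starProjection (u + T (T u)) = u + T u := by
  have hJT2 : ∀ x, J (T (T x)) = T (T (J x)) := fun x ↦ by
    simpa using DFunLike.congr_fun (commute_mul_self_of_mul_eq_neg_mul hJT).eq x
  apply Submodule.eq_starProjection_of_mem_of_inner_eq_zero
  · rw [hK]
    exact Submodule.le_topologicalClosure _ ⟨u, mem_ker_sub_one_iff.mpr hu, by simp⟩
  · have hperp : u + T (T u) - (u + T u) ∈ (Submodule.map ((1 + T : E →L[ℂ] E) : E →ₗ[ℂ] E)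
        (LinearMap.ker ((J - 1 : E →L[ℂ] E) : E →ₗ[ℂ] E)))ᗮ := by
      rw [Submodule.mem_orthogonal']
      rintro _ ⟨v, hv, rfl⟩
      have hsymm := ((IsSelfAdjoint.one _).add hT).isSymmetric (u + T (T u) - (u + T u)) v
      simp only [ContinuousLinearMap.coe_coe] at hsymm ⊢
      rw [← hsymm]
      apply hJ.inner_eq_zero_of_apply_eq_neg_of_apply_eq _ (mem_ker_sub_one_iff.mp hv)
      have h : (1 + T) (u + T (T u) - (u + T u)) = T (T (T u) - u) := by
        simp only [add_apply, one_apply_eq_self, map_sub, map_add]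
        abel
      rw [h, apply_apply_of_mul_eq_neg_mul hJT, map_sub, hJT2, hu]
    rw [← Submodule.orthogonal_closure, ← hK] at hperp
    exact (Submodule.mem_orthogonal' _ _).mp hperp

end FundamentalSymmetry

theorem stmt_15_general {E : Type*} [NormedAddCommGroup E] [InnerProductSpace ℂ E] [CompleteSpace E]
    (J T : E →L[ℂ] E) (hJ : IsSelfAdjoint J)
    (hT : IsSelfAdjoint T)
    (hJT : J * T = -(T * J))
    (K : Submodule ℂ E) [CompleteSpace K]
    (hK : K = (Submodule.map ((1 + T : E →L[ℂ] E) : E →ₗ[ℂ] E)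
        (LinearMap.ker ((J - 1 : E →L[ℂ] E) : E →ₗ[ℂ] E))).topologicalClosure) :
    ∀ f : E, J f = f →
      ((1 : ℂ)/2) • ((K.orthogonalProjectionOnto f : E) + J (K.orthogonalProjectionOnto f : E)) =
          Ring.inverse (1 + T * T) f ∧
      f - ((1 : ℂ)/2) • ((K.orthogonalProjectionOnto f : E) + J (K.orthogonalProjectionOnto f : E)) =
          (T * T) (Ring.inverse (1 + T * T) f) := by
  intro f hf
  set u := Ring.inverse (1 + T * T) f
  have hunit := hT.isUnit_one_add_mul_self
  have hfu : f = u + T (T u) := by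
    simpa using (DFunLike.congr_fun (Ring.mul_inverse_cancel _ hunit) f).symm
  have hu : J u = u := by
    have hcomm := ((Commute.one_right J).add_right
      (commute_mul_self_of_mul_eq_neg_mul hJT)).ringInverse_right hunit
    calc J u = Ring.inverse (1 + T * T) (J f) := DFunLike.congr_fun hcomm.eq f
      _ = u := by rw [hf]
  have hproj : (K.orthogonalProjectionOnto f : E) = u + T u := by
    rw [← Submodule.starProjection_apply, hfu,
      starProjection_add_apply_apply hJ hT hJT hK hu]
  have hhalf : ((1 : ℂ)/2) • ((u + T u) + J (u + T u)) = u := by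
    have h2 : u + T u + J (u + T u) = (2 : ℂ) • u := by
      rw [map_add, hu, apply_apply_of_mul_eq_neg_mul hJT, hu, two_smul]
      abel
    rw [h2, smul_smul]
    norm_num
  rw [hproj, hhalf]
  exact ⟨rfl, by rw [hfu]; simp⟩

/-- Let `T` be a bounded self-adjoint strong contraction (with `‖T‖ < 1`)
anticommuting with the fundamental symmetry `J`, let `L₊ = (I+T)H₊` where
`H₊ = ker(J−I)`, let `P̂` be the orthogonal projection onto the closure `K` of `L₊`, and
`P₊ = (1/2)(I+J)`. Then for every `f ∈ H₊`, `P₊ P̂ f = (I+T²)^{−1} f`; consequently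
`(I − P₊P̂)f = T²(I+T²)^{−1} f` on `H₊`. -/
theorem stmt_15 {E : Type*} [NormedAddCommGroup E] [InnerProductSpace ℂ E] [CompleteSpace E]
    (J T : E →L[ℂ] E) (hJ : IsSelfAdjoint J) (hJ2 : J * J = 1)
    (hT : IsSelfAdjoint T) (hTc : ∀ f : E, f ≠ 0 → ‖T f‖ < ‖f‖) (hTn : ‖T‖ < 1)
    (hJT : J * T = -(T * J))
    (K : Submodule ℂ E) [CompleteSpace K]
    (hK : K = (Submodule.map ((1 + T : E →L[ℂ] E) : E →ₗ[ℂ] E)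
        (LinearMap.ker ((J - 1 : E →L[ℂ] E) : E →ₗ[ℂ] E))).topologicalClosure) :
    ∀ f : E, J f = f →
      ((1 : ℂ)/2) • ((K.orthogonalProjectionOnto f : E) + J (K.orthogonalProjectionOnto f : E)) =
          Ring.inverse (1 + T * T) f ∧
      f - ((1 : ℂ)/2) • ((K.orthogonalProjectionOnto f : E) + J (K.orthogonalProjectionOnto f : E)) =
          (T * T) (Ring.inverse (1 + T * T) f) :=
  stmt_15_general J T hJ hT hJT K hK
end

section
/- Let H be a bounded operator on a Hilbert space that commutes with C = J e^Q, where Q is bounded self-adjoint and JQ = −QJ, and suppose H is J-self-adjoint: JH = H*J. Then H is self-adjoint with respect to the equivalent inner product (f,g)_C = (e^Q f, g), i.e., (Hf, g)_C = (f, Hg)_C for all f, g ∈ H. -/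
/-!
Since `J² = 1`, the relation `JH = H*J` gives `H* = JHJ`, so commuting with `C = J e^Q` yields
`H* e^Q = J H (J e^Q) = J (J e^Q) H = e^Q H`. This intertwining is exactly the symmetry of `H`
for the form `(e^Q f, g)`.
-/

open NormedSpace

theorem mul_eq_mul_of_mul_self_eq_one_of_commute_mul {M : Type*} [Monoid M] {J H K P : M}
    (hJ2 : J * J = 1) (hJH : J * H = K * J) (hcomm : H * (J * P) = J * P * H) :
    K * P = P * H :=
  calc K * P = K * J * (J * P) := by rw [mul_assoc K, ← mul_assoc J, hJ2, one_mul]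
    _ = J * (H * (J * P)) := by rw [← hJH, mul_assoc]
    _ = P * H := by rw [hcomm, ← mul_assoc, ← mul_assoc, hJ2, one_mul]

theorem ContinuousLinearMap.inner_apply_apply_eq_of_adjoint_mul_eq {E : Type*}
    [NormedAddCommGroup E] [InnerProductSpace ℂ E] [CompleteSpace E] {P H : E →L[ℂ] E}
    (h : adjoint H * P = P * H) (f g : E) :
    inner ℂ (P (H f)) g = inner ℂ (P f) (H g) := by
  rw [← mul_apply_eq_comp, ← h, mul_apply_eq_comp, adjoint_inner_left]

theorem stmt_19_general {E : Type*} [NormedAddCommGroup E] [InnerProductSpace ℂ E] [CompleteSpace E]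
    (J Q H : E →L[ℂ] E) (hJ2 : J * J = 1)
    (C : E →L[ℂ] E) (hC : C = J * exp Q)
    (hcomm : H * C = C * H)
    (hJsa : J * H = ContinuousLinearMap.adjoint H * J) :
    ∀ f g : E, (inner ℂ ((exp Q) (H f)) g : ℂ) = inner ℂ ((exp Q) f) (H g) := by
  subst hC
  exact ContinuousLinearMap.inner_apply_apply_eq_of_adjoint_mul_eq
    (mul_eq_mul_of_mul_self_eq_one_of_commute_mul hJ2 hJsa hcomm)

/-- If a bounded operator `H` commutes with `C = J e^Q` (`Q` bounded
self-adjoint, `JQ = −QJ`) and is `J`-self-adjoint (`JH = H*J`), then `H` is self-adjoint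
for the equivalent inner product `(f,g)_C = (e^Q f, g)`:
`(Hf, g)_C = (f, Hg)_C` for all `f, g`. -/
theorem stmt_19 {E : Type*} [NormedAddCommGroup E] [InnerProductSpace ℂ E] [CompleteSpace E]
    (J Q H : E →L[ℂ] E) (hJ : IsSelfAdjoint J) (hJ2 : J * J = 1)
    (hQ : IsSelfAdjoint Q) (hJQ : J * Q = -(Q * J))
    (C : E →L[ℂ] E) (hC : C = J * exp Q)
    (hcomm : H * C = C * H)
    (hJsa : J * H = ContinuousLinearMap.adjoint H * J) :
    ∀ f g : E, (inner ℂ ((exp Q) (H f)) g : ℂ) = inner ℂ ((exp Q) f) (H g) :=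
  stmt_19_general J Q H hJ2 C hC hcomm hJsa
end
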